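/- arXiv:2406.05864 — 2 statements merged into one kernel-verified Lean document; each statement's English description precedes it below -/
import Mathlib

section
/- Let u be a unitary on H, q ∈ 𝕋, S the bilateral shift on ℓ²(ℤ) (S e_k = e_{k+1}), and p_k the orthogonal projection onto ℂe_k. Define ũ = u ⊗ S and ṽ = ∑_{k∈ℤ} q^k u^k v u^{-k} ⊗ p_k on H ⊗ ℓ²(ℤ), where v is any unitary on H. Then ũ and ṽ are unitaries satisfying ṽũ = q·ũṽ. -/
/-!
Both `ũ` and `ṽ` act on `ℓ²(ℤ, H)` by permuting the coordinates (by `k ↦ k - 1`, resp. trivially)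
and then applying a unitary in each coordinate (`u`, resp. `q ^ k • u ^ k v u ^ (-k)`); such an
operator preserves inner products and is onto, hence unitary. The relation `ṽ ũ = q ũ ṽ` holds
coordinatewise because `(u ^ k v u ^ (-k)) u = u (u ^ (k - 1) v u ^ (-(k - 1)))` and
`q * q ^ (k - 1) = q ^ k`.
-/

/-- Integer powers of an operator `u`, where for `k < 0` we use `(u*)^(-k)`. -/
noncomputable def opZpow {H : Type*} [NormedAddCommGroup H] [InnerProductSpace ℂ H]
    [CompleteSpace H] (u : H →L[ℂ] H) : ℤ → (H →L[ℂ] H)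
  | Int.ofNat n => u ^ n
  | Int.negSucc n => (star u) ^ (n + 1)

open ContinuousLinearMap

theorem Memℓp.comp_equiv {ι : Type*} {E : ι → Type*} [∀ i, NormedAddCommGroup (E i)]
    {p : ENNReal} {f : ∀ i, E i} (hf : Memℓp f p) (σ : ι ≃ ι) :
    Memℓp (fun i => f (σ i)) p := by
  obtain rfl | rfl | hp := p.trichotomy
  · exact memℓp_zero_iff.mpr ((memℓp_zero_iff.mp hf).preimage σ.injective.injOn)
  · refine memℓp_infty_iff.mpr ?_
    change BddAbove (Set.range ((fun i => ‖f i‖) ∘ σ))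
    rw [σ.surjective.range_comp]
    exact memℓp_infty_iff.mp hf
  · exact memℓp_gen (σ.summable_iff.mpr (hf.summable hp))

section

variable {𝕜 E : Type*} [RCLike 𝕜] [NormedAddCommGroup E] [InnerProductSpace 𝕜 E] [CompleteSpace E]

theorem ContinuousLinearMap.mem_unitary_of_inner_map_map_of_surjective (T : E →L[𝕜] E)
    (hT : ∀ x y, inner 𝕜 (T x) (T y) = inner 𝕜 x y) (hsurj : Function.Surjective T) :
    T ∈ unitary (E →L[𝕜] E) :=
  (Unitary.linearIsometryEquiv.symm <| LinearIsometryEquiv.ofSurjective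
    ⟨T.toLinearMap, (LinearMap.norm_map_iff_inner_map_map T.toLinearMap).mpr hT⟩ hsurj).prop

theorem lp.mem_unitary_of_apply_eq {ι : Type*} (σ : ι ≃ ι) (W : ι → E →L[𝕜] E)
    (hW : ∀ i, W i ∈ unitary (E →L[𝕜] E)) (T : lp (fun _ : ι => E) 2 →L[𝕜] lp (fun _ : ι => E) 2)
    (hT : ∀ f i, (T f : ι → E) i = W i (f (σ i))) :
    T ∈ unitary (lp (fun _ : ι => E) 2 →L[𝕜] lp (fun _ : ι => E) 2) := by
  refine T.mem_unitary_of_inner_map_map_of_surjective (fun f g => ?_) (fun g => ?_)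
  · simp only [lp.inner_eq_tsum, hT, inner_map_map_of_mem_unitary (hW _)]
    exact σ.tsum_eq fun i => inner 𝕜 (f i) (g i)
  · have hmem : Memℓp (fun i => star (W (σ.symm i)) (g (σ.symm i))) 2 :=
      ((lp.memℓp g).comp_equiv σ.symm).mono' fun i =>
        (norm_map_of_mem_unitary (Unitary.star_mem (hW _)) _).le
    refine ⟨⟨_, hmem⟩, lp.ext (funext fun i => ?_)⟩
    rw [hT]
    simp only [Equiv.symm_apply_apply]
    exact congr($(Unitary.mul_star_self_of_mem (hW i)) (g i))

end

section opZpow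

variable {H : Type*} [NormedAddCommGroup H] [InnerProductSpace ℂ H] [CompleteSpace H]
  {u : H →L[ℂ] H}

theorem opZpow_eq_coe_zpow (hu : u ∈ unitary (H →L[ℂ] H)) (k : ℤ) :
    opZpow u k = ((⟨u, hu⟩ ^ k : unitary (H →L[ℂ] H)) : H →L[ℂ] H) := by
  cases k with
  | ofNat n =>
    change u ^ n = _
    rw [Int.ofNat_eq_natCast, zpow_natCast, SubmonoidClass.coe_pow]
  | negSucc n =>
    change star u ^ (n + 1) = _
    rw [zpow_negSucc, ← Unitary.star_eq_inv, Unitary.coe_star, SubmonoidClass.coe_pow, star_pow]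

theorem opZpow_mem_unitary (hu : u ∈ unitary (H →L[ℂ] H)) (k : ℤ) :
    opZpow u k ∈ unitary (H →L[ℂ] H) := by
  rw [opZpow_eq_coe_zpow hu]
  exact SetLike.coe_mem _

theorem opZpow_conj_mul_self (hu : u ∈ unitary (H →L[ℂ] H)) (v : H →L[ℂ] H) (k : ℤ) :
    opZpow u k * v * opZpow u (-k) * u = u * (opZpow u (k - 1) * v * opZpow u (-(k - 1))) := by
  let U : unitary (H →L[ℂ] H) := ⟨u, hu⟩
  have hk : opZpow u k = u * opZpow u (k - 1) := by
    simp only [opZpow_eq_coe_zpow hu]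
    exact congr(($(show U ^ k = U * U ^ (k - 1) by group) : H →L[ℂ] H))
  have hnegk : opZpow u (-k) * u = opZpow u (-(k - 1)) := by
    simp only [opZpow_eq_coe_zpow hu]
    exact congr(($(show U ^ (-k) * U = U ^ (-(k - 1)) by group) : H →L[ℂ] H))
  rw [hk, ← hnegk]
  simp only [mul_assoc]

end opZpow

/-- `H ⊗ ℓ²(ℤ)` is modelled as `ℓ²(ℤ, H)`. -/
theorem stmt_3 {H : Type*} [NormedAddCommGroup H] [InnerProductSpace ℂ H] [CompleteSpace H]
    (q : ℂ) (hq : ‖q‖ = 1) (u v : H →L[ℂ] H)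
    (hu : u ∈ unitary (H →L[ℂ] H)) (hv : v ∈ unitary (H →L[ℂ] H))
    (Ut Vt : lp (fun _ : ℤ => H) 2 →L[ℂ] lp (fun _ : ℤ => H) 2)
    (hUt : ∀ (f : lp (fun _ : ℤ => H) 2) (k : ℤ), (Ut f : ∀ _ : ℤ, H) k = u (f (k - 1)))
    (hVt : ∀ (f : lp (fun _ : ℤ => H) 2) (k : ℤ),
      (Vt f : ∀ _ : ℤ, H) k = q ^ k • (opZpow u k * v * opZpow u (-k)) (f k)) :
    Ut ∈ unitary (lp (fun _ : ℤ => H) 2 →L[ℂ] lp (fun _ : ℤ => H) 2) ∧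
    Vt ∈ unitary (lp (fun _ : ℤ => H) 2 →L[ℂ] lp (fun _ : ℤ => H) 2) ∧
    Vt * Ut = q • (Ut * Vt) := by
  have hq0 : q ≠ 0 := norm_ne_zero_iff.mp (hq ▸ one_ne_zero)
  have hqk : ∀ k : ℤ, q ^ k ∈ unitary ℂ := fun k => by
    rw [Unitary.mem_iff_star_mul_self, RCLike.star_def, RCLike.conj_mul, norm_zpow, hq]
    simp
  have hw : ∀ k : ℤ, opZpow u k * v * opZpow u (-k) ∈ unitary (H →L[ℂ] H) := fun k =>
    mul_mem (mul_mem (opZpow_mem_unitary hu k) hv) (opZpow_mem_unitary hu (-k))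
  refine ⟨lp.mem_unitary_of_apply_eq (Equiv.subRight 1) (fun _ => u) (fun _ => hu) Ut hUt,
    lp.mem_unitary_of_apply_eq (Equiv.refl ℤ) _
      (fun k => Unitary.smul_mem_of_mem (hqk k) (hw k)) Vt hVt, ?_⟩
  ext f k
  change (Vt (Ut f) : ℤ → H) k = q • (Ut (Vt f) : ℤ → H) k
  rw [hVt, hUt, hUt, hVt, map_smul, smul_smul, mul_comm, ← zpow_add_one₀ hq0, sub_add_cancel]
  exact congr(q ^ k • $(opZpow_conj_mul_self hu v k) (f (k - 1)))
end

section
/- Let q ∈ 𝕋, δ ∈ (0,1), and let u, v be unitaries on H with ‖vu - q·uv‖ ≤ δ. Then there exist a Hilbert space K, an isometry ι : H → K, and unitaries ũ, ṽ ∈ B(K) with ṽũ = q·ũṽ such that ‖u - ι*ũι‖ < √δ and ‖v - ι*ṽι‖ < √δ. -/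
/-!
The unitaries `A m = q⁻ᵐ vᵐ u v⁻ᵐ` (`twistedConj`) satisfy `v A m = q A (m + 1) v`, and
consecutive ones are at distance exactly `‖vu - quv‖ ≤ δ`, so `‖A k - u‖ ≤ k δ`. On `ℓ²(ℤ, H)`
the diagonal operator `ũ = diag (A m)` and the shift `ṽ` by one step with weight `v` are unitaries
with `ṽ ũ = q ũ ṽ`. Compressing to `H` embedded as `x ↦ N^(-1/2) ∑_{k<N} e_k ⊗ x` turns `ũ` into
the average of `A 0, …, A (N - 1)`, which is within `(N - 1) δ / 2` of `u`, and `ṽ` into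
`(1 - 1/N) v`. Taking `N = ⌊δ^(-1/2)⌋ + 1` makes both errors smaller than `√δ`.
-/

open scoped lp InnerProductSpace
open Finset ContinuousLinearMap Unitary

noncomputable section

lemma RCLike.mem_unitary_of_norm_eq_one {𝕜 : Type*} [RCLike 𝕜] {z : 𝕜} (hz : ‖z‖ = 1) :
    z ∈ unitary 𝕜 := by
  rw [Unitary.mem_iff_star_mul_self, RCLike.star_def, RCLike.conj_mul, hz]
  norm_num

lemma RCLike.inv_sqrt_mul_inv_sqrt_natCast {𝕜 : Type*} [RCLike 𝕜] (n : ℕ) :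
    (√(n : ℝ) : 𝕜)⁻¹ * (√(n : ℝ) : 𝕜)⁻¹ = (n : 𝕜)⁻¹ := by
  rw [← RCLike.ofReal_inv, ← RCLike.ofReal_mul, ← mul_inv, Real.mul_self_sqrt (Nat.cast_nonneg _)]
  simp

lemma exists_nat_inv_lt_and_sub_one_mul_le {r : ℝ} (hr : 0 < r) :
    ∃ N : ℕ, 0 < N ∧ (N : ℝ)⁻¹ < r ∧ ((N : ℝ) - 1) * r ≤ 1 := by
  refine ⟨⌊r⁻¹⌋₊ + 1, Nat.succ_pos _, ?_, ?_⟩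
  · rw [inv_lt_comm₀ (by positivity) hr]
    exact_mod_cast Nat.lt_floor_add_one r⁻¹
  · push_cast
    rw [add_sub_cancel_right, ← le_div_iff₀ hr, one_div]
    exact Nat.floor_le (inv_nonneg.mpr hr.le)

lemma norm_sub_inv_smul_sum_range_le {𝕜 E : Type*} [RCLike 𝕜] [NormedAddCommGroup E]
    [NormedSpace 𝕜 E] {N : ℕ} (hN : 0 < N) (x : E) (f : ℕ → E) {C : ℝ}
    (hf : ∀ k, ‖f k - x‖ ≤ k * C) :
    ‖x - (N : 𝕜)⁻¹ • ∑ k ∈ range N, f k‖ ≤ (N - 1) / 2 * C := by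
  have hN₀ : (N : 𝕜) ≠ 0 := Nat.cast_ne_zero.mpr hN.ne'
  have gauss : ∑ k ∈ range N, (k : ℝ) = N * (N - 1) / 2 := by
    have := congrArg (Nat.cast : ℕ → ℝ) (Finset.sum_range_id_mul_two N)
    push_cast [Nat.cast_sub hN] at this
    linarith
  calc ‖x - (N : 𝕜)⁻¹ • ∑ k ∈ range N, f k‖
      = ‖(N : 𝕜)⁻¹ • ∑ k ∈ range N, (f k - x)‖ := by
        rw [Finset.sum_sub_distrib, Finset.sum_const, Finset.card_range, smul_sub,
          ← Nat.cast_smul_eq_nsmul 𝕜, smul_smul, inv_mul_cancel₀ hN₀, one_smul, norm_sub_rev]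
    _ ≤ (N : ℝ)⁻¹ * ∑ k ∈ range N, k * C := by
        rw [norm_smul, norm_inv, RCLike.norm_natCast]
        gcongr
        exact (norm_sum_le _ _).trans (Finset.sum_le_sum fun k _ ↦ hf k)
    _ = (N - 1) / 2 * C := by
        rw [← Finset.sum_mul, gauss]
        field_simp

section TwistedConj

variable {A : Type*} [NormedRing A] [StarRing A] [NormedAlgebra ℂ A]

def twistedConj (q : ℂ) (u v : unitary A) (m : ℤ) : A :=
  q ^ (-m) • conjStarAlgAut ℂ A (v ^ m) u

variable {q : ℂ} {u v : unitary A}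

@[simp]
lemma twistedConj_zero : twistedConj q u v 0 = u := by
  simp [twistedConj]

lemma twistedConj_add_one (hq : q ≠ 0) (m : ℤ) :
    twistedConj q u v (m + 1) = q⁻¹ • conjStarAlgAut ℂ A v (twistedConj q u v m) := by
  rw [twistedConj, twistedConj, map_smul, smul_smul, ← zpow_neg_one, ← zpow_add₀ hq, add_comm m,
    zpow_add, map_mul, zpow_one, StarAlgEquiv.mul_apply]
  ring_nf

lemma mul_twistedConj (hq : q ≠ 0) (m : ℤ) :
    (v : A) * twistedConj q u v m = q • (twistedConj q u v (m + 1) * v) := by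
  rw [twistedConj_add_one hq, smul_mul_assoc, smul_smul, mul_inv_cancel₀ hq, one_smul,
    conjStarAlgAut_apply, mul_assoc, Unitary.coe_star_mul_self, mul_one]

lemma conjStarAlgAut_zpow_self (v : unitary A) (m : ℤ) : conjStarAlgAut ℂ A (v ^ m) v = v := by
  rw [conjStarAlgAut_apply, ← Unitary.coe_star, Unitary.star_eq_inv, ← Submonoid.coe_mul,
    ← Submonoid.coe_mul, (Commute.self_zpow v m).symm.eq, mul_inv_cancel_right]

variable [StarModule ℂ A] in
lemma twistedConj_mem_unitary (hq : ‖q‖ = 1) (m : ℤ) : twistedConj q u v m ∈ unitary A := by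
  refine Unitary.smul_mem_of_mem (RCLike.mem_unitary_of_norm_eq_one ?_) ?_
  · rw [norm_zpow, hq, one_zpow]
  · rw [conjStarAlgAut_apply, ← Unitary.coe_star]
    exact mul_mem (mul_mem (v ^ m).prop u.prop) (star (v ^ m)).prop

variable [CStarRing A]

lemma norm_conjStarAlgAut (w : unitary A) (x : A) : ‖conjStarAlgAut ℂ A w x‖ = ‖x‖ := by
  rw [conjStarAlgAut_apply, ← Unitary.coe_star, CStarRing.norm_mul_coe_unitary,
    CStarRing.norm_coe_unitary_mul]

lemma norm_twistedConj_add_one_sub (hq : ‖q‖ = 1) (m : ℤ) :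
    ‖twistedConj q u v (m + 1) - twistedConj q u v m‖ = ‖(v * u : A) - q • (u * v : A)‖ := by
  have hq0 : q ≠ 0 := norm_ne_zero_iff.mp (by rw [hq]; exact one_ne_zero)
  calc ‖twistedConj q u v (m + 1) - twistedConj q u v m‖
      = ‖(twistedConj q u v (m + 1) - twistedConj q u v m) * v‖ :=
        (CStarRing.norm_mul_coe_unitary _ _).symm
    _ = ‖q⁻¹ • ((v : A) * twistedConj q u v m - q • (twistedConj q u v m * v))‖ := by
        rw [mul_twistedConj hq0, sub_mul, smul_sub, smul_smul, inv_mul_cancel₀ hq0, one_smul,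
          smul_smul, inv_mul_cancel₀ hq0, one_smul]
    _ = ‖q⁻¹ • q ^ (-m) • conjStarAlgAut ℂ A (v ^ m) ((v * u : A) - q • (u * v : A))‖ := by
        rw [map_sub, map_smul, map_mul, map_mul, conjStarAlgAut_zpow_self, twistedConj,
          mul_smul_comm, smul_mul_assoc, smul_comm q, smul_sub, smul_sub, smul_sub]
    _ = ‖(v * u : A) - q • (u * v : A)‖ := by
        rw [norm_smul, norm_smul, norm_conjStarAlgAut, norm_inv, norm_zpow, hq]
        simp

lemma norm_twistedConj_sub_le (hq : ‖q‖ = 1) (n : ℕ) :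
    ‖twistedConj q u v n - u‖ ≤ n * ‖(v * u : A) - q • (u * v : A)‖ := by
  induction n with
  | zero => simp
  | succ n ih =>
    calc ‖twistedConj q u v (n + 1 : ℕ) - u‖
        ≤ ‖twistedConj q u v (n + 1) - twistedConj q u v n‖ + ‖twistedConj q u v n - u‖ := by
          push_cast
          exact norm_sub_le_norm_sub_add_norm_sub _ _ _
      _ ≤ (n + 1 : ℕ) * ‖(v * u : A) - q • (u * v : A)‖ := by
          rw [norm_twistedConj_add_one_sub hq]
          push_cast
          linarith

end TwistedConj

namespace lp

section WeightedComp

variable {𝕜 α E : Type*} [NormedField 𝕜] [NormedAddCommGroup E] [NormedSpace 𝕜 E]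

lemma memℓp_two_weightedComp (σ : α ≃ α) (T : α → E ≃ₗᵢ[𝕜] E) (ξ : ℓ²(α, E)) :
    Memℓp (fun n ↦ T n (ξ (σ n))) 2 := by
  refine memℓp_gen ?_
  simpa [Function.comp_def] using
    (σ.summable_iff (f := fun n ↦ ‖ξ n‖ ^ (2 : ENNReal).toReal)).2
      ((lp.memℓp ξ).summable (by norm_num))

def weightedComp (σ : α ≃ α) (T : α → E ≃ₗᵢ[𝕜] E) : ℓ²(α, E) ≃ₗᵢ[𝕜] ℓ²(α, E) where
  toFun ξ := ⟨fun n ↦ T n (ξ (σ n)), memℓp_two_weightedComp σ T ξ⟩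
  invFun ξ := ⟨fun n ↦ (T (σ.symm n)).symm (ξ (σ.symm n)),
    memℓp_two_weightedComp σ.symm (fun n ↦ (T (σ.symm n)).symm) ξ⟩
  map_add' ξ η := lp.ext <| funext fun n ↦ map_add (T n) (ξ (σ n)) (η (σ n))
  map_smul' c ξ := lp.ext <| funext fun n ↦ map_smul (T n) c (ξ (σ n))
  left_inv ξ := lp.ext <| funext fun n ↦ by simp
  right_inv ξ := lp.ext <| funext fun n ↦ by simp
  norm_map' ξ := by
    rw [lp.norm_eq_tsum_rpow (by norm_num), lp.norm_eq_tsum_rpow (by norm_num)]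
    congr 1
    simpa using σ.tsum_eq (fun n ↦ ‖ξ n‖ ^ (2 : ENNReal).toReal)

@[simp]
lemma weightedComp_apply (σ : α ≃ α) (T : α → E ≃ₗᵢ[𝕜] E) (ξ : ℓ²(α, E)) (n : α) :
    weightedComp σ T ξ n = T n (ξ (σ n)) := rfl

lemma weightedComp_subRight_mul_weightedComp_refl {q : 𝕜} (w : E ≃ₗᵢ[𝕜] E)
    (T : ℤ → E ≃ₗᵢ[𝕜] E) (h : ∀ m x, w (T m x) = q • T (m + 1) (w x)) :
    (weightedComp (Equiv.subRight (1 : ℤ)) (fun _ ↦ w) : ℓ²(ℤ, E) →L[𝕜] ℓ²(ℤ, E))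
        * weightedComp (.refl ℤ) T
      = q • ((weightedComp (.refl ℤ) T : ℓ²(ℤ, E) →L[𝕜] ℓ²(ℤ, E))
        * weightedComp (Equiv.subRight (1 : ℤ)) fun _ ↦ w) := by
  ext ξ n
  simpa using h (n - 1) (ξ (n - 1))

end WeightedComp

section Spread

variable {𝕜 α E : Type*} [RCLike 𝕜] [DecidableEq α] [NormedAddCommGroup E] [InnerProductSpace 𝕜 E]

variable (𝕜) in
def spread (s : Finset α) : E →L[𝕜] ℓ²(α, E) :=
  (√(#s : ℝ) : 𝕜)⁻¹ • ∑ k ∈ s, lp.singleContinuousLinearMap 𝕜 (fun _ ↦ E) 2 k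

lemma spread_apply (s : Finset α) (x : E) (n : α) :
    spread 𝕜 s x n = if n ∈ s then (√(#s : ℝ) : 𝕜)⁻¹ • x else 0 := by
  rw [spread, smul_apply, _root_.sum_apply, lp.coeFn_smul, lp.coeFn_sum]
  simp [Finset.sum_apply, lp.single_apply, Pi.single_apply]

lemma inner_spread_right (s : Finset α) (ξ : ℓ²(α, E)) (y : E) :
    ⟪ξ, spread 𝕜 s y⟫_𝕜 = (√(#s : ℝ) : 𝕜)⁻¹ * ∑ j ∈ s, ⟪ξ j, y⟫_𝕜 := by
  simp [spread, inner_smul_right, inner_sum, lp.inner_single_right]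

lemma inner_weightedComp_spread_spread (s : Finset α) (σ : α ≃ α) (T : α → E ≃ₗᵢ[𝕜] E)
    (x y : E) :
    ⟪weightedComp σ T (spread 𝕜 s x), spread 𝕜 s y⟫_𝕜
      = (#s : 𝕜)⁻¹ * ∑ j ∈ s with σ j ∈ s, ⟪T j x, y⟫_𝕜 := by
  rw [inner_spread_right, Finset.sum_filter, Finset.mul_sum, Finset.mul_sum]
  refine Finset.sum_congr rfl fun j _ ↦ ?_
  rw [weightedComp_apply, spread_apply]
  split_ifs
  · rw [map_smul, inner_smul_left, map_inv₀, RCLike.conj_ofReal, ← mul_assoc,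
      RCLike.inv_sqrt_mul_inv_sqrt_natCast]
  · rw [map_zero, inner_zero_left, mul_zero, mul_zero]

variable [CompleteSpace E]

lemma adjoint_spread_comp_weightedComp_comp_spread (s : Finset α) (σ : α ≃ α)
    (T : α → E ≃ₗᵢ[𝕜] E) :
    (spread 𝕜 s).adjoint ∘L (weightedComp σ T : ℓ²(α, E) →L[𝕜] ℓ²(α, E)) ∘L spread 𝕜 s
      = (#s : 𝕜)⁻¹ • ∑ j ∈ s with σ j ∈ s, (T j : E →L[𝕜] E) := by
  ext x
  refine ext_inner_right 𝕜 fun y ↦ ?_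
  rw [comp_apply, comp_apply, adjoint_inner_left, LinearIsometryEquiv.coe_coe'',
    inner_weightedComp_spread_spread, smul_apply, inner_smul_left, _root_.sum_apply, sum_inner,
    map_inv₀, map_natCast]
  rfl

lemma adjoint_spread_comp_spread {s : Finset α} (hs : s.Nonempty) :
    (spread 𝕜 s).adjoint ∘L spread 𝕜 s = (1 : E →L[𝕜] E) := by
  ext x
  refine ext_inner_right 𝕜 fun y ↦ ?_
  rw [comp_apply, adjoint_inner_left, inner_spread_right, one_apply_eq_self,
    Finset.sum_congr rfl fun j hj ↦ by rw [spread_apply, if_pos hj], Finset.sum_const,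
    inner_smul_left, map_inv₀, RCLike.conj_ofReal, nsmul_eq_mul]
  calc _ = ((√(#s : ℝ) : 𝕜)⁻¹ * (√(#s : ℝ) : 𝕜)⁻¹) * #s * ⟪x, y⟫_𝕜 := by ring
    _ = ⟪x, y⟫_𝕜 := by
      rw [RCLike.inv_sqrt_mul_inv_sqrt_natCast,
        inv_mul_cancel₀ (by simpa using hs.card_ne_zero), one_mul]

lemma isometry_spread {s : Finset α} (hs : s.Nonempty) : Isometry (spread 𝕜 s : E → ℓ²(α, E)) :=
  AddMonoidHomClass.isometry_of_norm _ <|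
    (norm_map_iff_adjoint_comp_self _).mpr (adjoint_spread_comp_spread hs)

lemma adjoint_spread_comp_weightedComp_refl_comp_spread (N : ℕ) (T : ℤ → E ≃ₗᵢ[𝕜] E) :
    (spread 𝕜 ((range N).map Nat.castEmbedding)).adjoint
        ∘L (weightedComp (.refl ℤ) T : ℓ²(ℤ, E) →L[𝕜] ℓ²(ℤ, E))
        ∘L spread 𝕜 ((range N).map Nat.castEmbedding)
      = (N : 𝕜)⁻¹ • ∑ k ∈ range N, (T k : E →L[𝕜] E) := by
  rw [adjoint_spread_comp_weightedComp_comp_spread,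
    Finset.filter_true_of_mem (p := fun j ↦ Equiv.refl ℤ j ∈ _) fun _ h ↦ h, Finset.sum_map,
    Finset.card_map, Finset.card_range]
  rfl

lemma adjoint_spread_comp_weightedComp_subRight_comp_spread {N : ℕ} (hN : 0 < N)
    (w : E ≃ₗᵢ[𝕜] E) :
    (spread 𝕜 ((range N).map Nat.castEmbedding)).adjoint
        ∘L (weightedComp (Equiv.subRight (1 : ℤ)) (fun _ ↦ w) : ℓ²(ℤ, E) →L[𝕜] ℓ²(ℤ, E))
        ∘L spread 𝕜 ((range N).map Nat.castEmbedding)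
      = (1 - (N : 𝕜)⁻¹) • (w : E →L[𝕜] E) := by
  set s : Finset ℤ := (range N).map Nat.castEmbedding
  have hfilter : {j ∈ s | Equiv.subRight (1 : ℤ) j ∈ s} = s.erase 0 := by
    ext j
    simp only [s, Finset.mem_filter, Finset.mem_erase, Finset.mem_map, Finset.mem_range,
      Nat.castEmbedding_apply, Equiv.subRight_apply]
    constructor
    · rintro ⟨⟨k, hk, rfl⟩, m, -, hmk⟩
      exact ⟨by omega, k, hk, rfl⟩
    · rintro ⟨hj, k, hk, rfl⟩
      exact ⟨⟨k, hk, rfl⟩, k - 1, by omega, by omega⟩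
  have hs : #s = N := by simp [s]
  have h0 : (0 : ℤ) ∈ s := Finset.mem_map.mpr ⟨0, Finset.mem_range.mpr hN, rfl⟩
  rw [adjoint_spread_comp_weightedComp_comp_spread, hfilter, Finset.sum_const,
    Finset.card_erase_of_mem h0, hs, ← Nat.cast_smul_eq_nsmul 𝕜, smul_smul, Nat.cast_sub hN,
    Nat.cast_one, mul_sub, inv_mul_cancel₀ (Nat.cast_ne_zero.mpr hN.ne'), mul_one]

end Spread

end lp

end

theorem stmt_5_general {H : Type u} [NormedAddCommGroup H] [InnerProductSpace ℂ H] [CompleteSpace H]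
    (q : ℂ) (hq : ‖q‖ = 1) (δ : ℝ) (hδ0 : 0 < δ) (u v : H →L[ℂ] H)
    (hu : u ∈ unitary (H →L[ℂ] H)) (hv : v ∈ unitary (H →L[ℂ] H))
    (h : ‖v * u - q • (u * v)‖ ≤ δ) :
    ∃ (K : Type u) (_ : NormedAddCommGroup K) (_ : InnerProductSpace ℂ K) (_ : CompleteSpace K)
      (ι : H →L[ℂ] K) (ut vt : K →L[ℂ] K),
      Isometry ι ∧ ut ∈ unitary (K →L[ℂ] K) ∧ vt ∈ unitary (K →L[ℂ] K) ∧
      vt * ut = q • (ut * vt) ∧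
      ‖u - ContinuousLinearMap.adjoint ι ∘L ut ∘L ι‖ < Real.sqrt δ ∧
      ‖v - ContinuousLinearMap.adjoint ι ∘L vt ∘L ι‖ < Real.sqrt δ := by
  have hq₀ : q ≠ 0 := norm_ne_zero_iff.mp (by rw [hq]; exact one_ne_zero)
  have hr : 0 < √δ := Real.sqrt_pos.mpr hδ0
  obtain ⟨N, hN, hN_inv, hN_le⟩ := exists_nat_inv_lt_and_sub_one_mul_le hr
  let U : unitary (H →L[ℂ] H) := ⟨u, hu⟩
  let V : unitary (H →L[ℂ] H) := ⟨v, hv⟩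
  let T : ℤ → H ≃ₗᵢ[ℂ] H := fun m ↦
    linearIsometryEquiv ⟨twistedConj q U V m, twistedConj_mem_unitary hq m⟩
  let s : Finset ℤ := (range N).map Nat.castEmbedding
  refine ⟨ℓ²(ℤ, H), inferInstance, inferInstance, inferInstance, lp.spread ℂ s,
    lp.weightedComp (.refl ℤ) T,
    lp.weightedComp (.subRight (1 : ℤ)) fun _ ↦ linearIsometryEquiv V,
    lp.isometry_spread (by simpa [s] using hN.ne'), (linearIsometryEquiv.symm _).prop,
    (linearIsometryEquiv.symm _).prop,
    lp.weightedComp_subRight_mul_weightedComp_refl _ _ fun m x ↦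
      DFunLike.congr_fun (mul_twistedConj (u := U) (v := V) hq₀ m) x, ?_, ?_⟩
  · rw [lp.adjoint_spread_comp_weightedComp_refl_comp_spread]
    calc _ ≤ ((N : ℝ) - 1) / 2 * ‖v * u - q • (u * v)‖ :=
          norm_sub_inv_smul_sum_range_le hN u _ fun k ↦ norm_twistedConj_sub_le hq k
      _ ≤ ((N : ℝ) - 1) / 2 * δ := by
          gcongr
          linarith [(Nat.one_le_cast (α := ℝ)).mpr hN]
      _ < √δ := by nlinarith [Real.mul_self_sqrt hδ0.le]
  · rw [lp.adjoint_spread_comp_weightedComp_subRight_comp_spread hN,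
      coe_linearIsometryEquiv_apply, sub_smul, one_smul, sub_sub_cancel, norm_smul, norm_inv,
      Complex.norm_natCast]
    calc _ ≤ (N : ℝ)⁻¹ * 1 := by
          gcongr
          exact opNorm_le_bound _ zero_le_one fun x ↦ by rw [norm_map_of_mem_unitary hv, one_mul]
      _ < √δ := by rwa [mul_one]

/-- Let `q ∈ 𝕋`, `δ ∈ (0,1)`, and `u, v` unitaries on `H` with `‖vu - q·uv‖ ≤ δ`.
Then there exist a Hilbert space `K`, an isometry `ι : H → K` and unitaries `ũ, ṽ ∈ B(K)` with
`ṽũ = q·ũṽ`, `‖u - ι*ũι‖ < √δ` and `‖v - ι*ṽι‖ < √δ`. -/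
theorem stmt_5 {H : Type u} [NormedAddCommGroup H] [InnerProductSpace ℂ H] [CompleteSpace H]
    (q : ℂ) (hq : ‖q‖ = 1) (δ : ℝ) (hδ0 : 0 < δ) (hδ1 : δ < 1) (u v : H →L[ℂ] H)
    (hu : u ∈ unitary (H →L[ℂ] H)) (hv : v ∈ unitary (H →L[ℂ] H))
    (h : ‖v * u - q • (u * v)‖ ≤ δ) :
    ∃ (K : Type u) (_ : NormedAddCommGroup K) (_ : InnerProductSpace ℂ K) (_ : CompleteSpace K)
      (ι : H →L[ℂ] K) (ut vt : K →L[ℂ] K),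
      Isometry ι ∧ ut ∈ unitary (K →L[ℂ] K) ∧ vt ∈ unitary (K →L[ℂ] K) ∧
      vt * ut = q • (ut * vt) ∧
      ‖u - ContinuousLinearMap.adjoint ι ∘L ut ∘L ι‖ < Real.sqrt δ ∧
      ‖v - ContinuousLinearMap.adjoint ι ∘L vt ∘L ι‖ < Real.sqrt δ :=
  stmt_5_general q hq δ hδ0 u v hu hv h
end
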